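/- The second deformed Bessel function 𝒥_n^μ(x) = ((x/2)^n/(Γ(1/2)Γ(n+1/2))) ∫_{−1}^{1} E_μ(isx)(1−s²)^{n−1/2} ds has Taylor expansion 𝒥_n^μ(x) = Σ_{k≥0} (−1)^k (2k)!/(k!(k+n)! [2k]_μ!) (x/2)^{2k+n}. -/

import Mathlib

/-- The deformed integer `[n]_μ = n + μ (1 - (-1)^n)`. -/
noncomputable def dIdx (μ : ℝ) (n : ℕ) : ℝ := n + μ * (1 - (-1 : ℝ) ^ n)

/-- The deformed factorial `[n]_μ!`. -/
noncomputable def dFact (μ : ℝ) : ℕ → ℝ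
  | 0 => 1
  | n + 1 => dIdx μ (n + 1) * dFact μ n

/-- The deformed exponential `E_μ(z) = Σ_{m≥0} z^m / [m]_μ!`. -/
noncomputable def EmuC (μ : ℝ) (z : ℂ) : ℂ := ∑' m : ℕ, z ^ m / (dFact μ m : ℂ)

/-!
Expanding `E_μ(isx)` in its power series and integrating term by term reduces the integral to the
moments `∫_{-1}^1 s^m (1 - s²)^(n - 1/2) ds`; the interchange is justified by dominated convergence,
since `m! ≤ [m]_μ!` for `μ ≥ 0` bounds the `m`-th term by `|x|^m / m!` times the weight. Odd moments
vanish by symmetry, the substitution `t = s²` turns the even ones into the Beta values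
`B(k + 1/2, n + 1/2)`, and Legendre's duplication formula evaluates `Γ(k + 1/2)`.
-/

open MeasureTheory intervalIntegral Set Nat Real Interval

lemma natCast_le_dIdx {μ : ℝ} (hμ : 0 ≤ μ) (n : ℕ) : (n : ℝ) ≤ dIdx μ n := by
  have : (-1 : ℝ) ^ n ≤ 1 := by
    rcases n.even_or_odd with h | h <;> simp [h.neg_one_pow]
  unfold dIdx
  nlinarith

lemma factorial_le_dFact {μ : ℝ} (hμ : 0 ≤ μ) (n : ℕ) : (n ! : ℝ) ≤ dFact μ n := by
  induction n with
  | zero => simp [dFact]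
  | succ n ih =>
    rw [Nat.factorial_succ, Nat.cast_mul, dFact]
    exact mul_le_mul (by exact_mod_cast natCast_le_dIdx hμ (n + 1)) ih (by positivity)
      (by linarith [natCast_le_dIdx hμ (n + 1)])

lemma dFact_pos {μ : ℝ} (hμ : 0 ≤ μ) (n : ℕ) : 0 < dFact μ n :=
  (Nat.cast_pos.mpr n.factorial_pos).trans_le (factorial_le_dFact hμ n)

lemma norm_pow_div_dFact_le {μ : ℝ} (hμ : 0 ≤ μ) (z : ℂ) (m : ℕ) :
    ‖z ^ m / (dFact μ m : ℂ)‖ ≤ ‖z‖ ^ m / m ! := by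
  rw [norm_div, norm_pow, Complex.norm_real, Real.norm_of_nonneg (dFact_pos hμ m).le]
  exact div_le_div_of_nonneg_left (by positivity) (by positivity) (factorial_le_dFact hμ m)

lemma hasSum_EmuC {μ : ℝ} (hμ : 0 ≤ μ) (z : ℂ) :
    HasSum (fun m => z ^ m / (dFact μ m : ℂ)) (EmuC μ z) :=
  (Summable.of_norm_bounded (Real.summable_pow_div_factorial ‖z‖)
    (norm_pow_div_dFact_le hμ z)).hasSum

lemma Real.Gamma_nat_add_half_eq (k : ℕ) :
    Gamma (k + 1 / 2) = (2 * k)! / (4 ^ k * k !) * Gamma (1 / 2) := by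
  have h := Real.Gamma_mul_Gamma_add_half (k + 1 / 2)
  rw [show (k : ℝ) + 1 / 2 + 1 / 2 = k + 1 by ring, show 2 * ((k : ℝ) + 1 / 2) = (2 * k : ℕ) + 1 by
    push_cast; ring, show (1 : ℝ) - ((2 * k : ℕ) + 1) = -(2 * k : ℕ) by ring,
    Real.Gamma_nat_eq_factorial, Real.Gamma_nat_eq_factorial, Real.rpow_neg zero_le_two,
    Real.rpow_natCast, pow_mul, ← Real.Gamma_one_half_eq] at h
  rw [← eq_div_iff (by positivity)] at h
  rw [h]
  ring

section Symmetric

variable {E : Type*} [NormedAddCommGroup E] {f : ℝ → E} {a : ℝ}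

lemma IntervalIntegrable.neg_of_even (hf : ∀ x, f (-x) = f x)
    (h : IntervalIntegrable f volume 0 a) : IntervalIntegrable f volume (-a) 0 := by
  simpa [hf] using ((IntervalIntegrable.iff_comp_neg).mp h).symm

variable [NormedSpace ℝ E]

lemma intervalIntegral.integral_eq_zero_of_odd (hf : ∀ x, f (-x) = -f x) :
    ∫ x in -a..a, f x = 0 := by
  have h := integral_comp_neg (a := -a) (b := a) f
  simp only [hf, intervalIntegral.integral_neg, neg_neg] at h
  rwa [neg_eq_iff_add_eq_zero, ← two_smul ℝ, smul_eq_zero, or_iff_right two_ne_zero] at h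

lemma intervalIntegral.integral_eq_two_smul_of_even (hf : ∀ x, f (-x) = f x)
    (h : IntervalIntegrable f volume 0 a) :
    ∫ x in -a..a, f x = (2 : ℝ) • ∫ x in 0..a, f x := by
  rw [← integral_add_adjacent_intervals (h.neg_of_even hf) h, two_smul]
  congr 1
  simpa [hf] using (integral_comp_neg (a := 0) (b := a) f).symm

end Symmetric

section Beta

variable {a b : ℝ}

lemma ofReal_rpow_mul_one_sub_rpow {t : ℝ} (ht : t ∈ Ioo 0 1) :
    ((t ^ (a - 1) * (1 - t) ^ (b - 1) : ℝ) : ℂ) =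
      (t : ℂ) ^ (a - 1 : ℂ) * (1 - t : ℂ) ^ (b - 1 : ℂ) := by
  rw [Complex.ofReal_mul, Complex.ofReal_cpow ht.1.le, Complex.ofReal_cpow (by linarith [ht.2])]
  push_cast
  rfl

lemma integrableOn_rpow_mul_one_sub_rpow (ha : 0 < a) (hb : 0 < b) :
    IntegrableOn (fun t : ℝ => t ^ (a - 1) * (1 - t) ^ (b - 1)) (Ioo 0 1) := by
  have h := ((intervalIntegrable_iff_integrableOn_Ioo_of_le zero_le_one).mp
    (Complex.betaIntegral_convergent (u := a) (v := b) (by simpa) (by simpa))).re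
  refine IntegrableOn.congr_fun h (fun t ht => ?_) measurableSet_Ioo
  simp [← ofReal_rpow_mul_one_sub_rpow ht]

lemma integral_rpow_mul_one_sub_rpow (ha : 0 < a) (hb : 0 < b) :
    ∫ t in Ioo 0 1, t ^ (a - 1) * (1 - t) ^ (b - 1) = ProbabilityTheory.beta a b := by
  have h := Complex.betaIntegral_eq_Gamma_mul_div a b (by simpa) (by simpa)
  rw [Complex.betaIntegral, integral_of_le zero_le_one, integral_Ioc_eq_integral_Ioo,
    ← setIntegral_congr_fun measurableSet_Ioo (fun t ht => ofReal_rpow_mul_one_sub_rpow ht),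
    integral_complex_ofReal, ← Complex.ofReal_add, Complex.Gamma_ofReal, Complex.Gamma_ofReal,
    Complex.Gamma_ofReal] at h
  rw [ProbabilityTheory.beta]
  exact_mod_cast h

lemma ProbabilityTheory.beta_nat_add_half_nat_add_half (k n : ℕ) :
    ProbabilityTheory.beta (k + 1 / 2) (n + 1 / 2) =
      (2 * k)! * Gamma (1 / 2) * Gamma (n + 1 / 2) / (4 ^ k * k ! * (k + n)!) := by
  rw [ProbabilityTheory.beta, Real.Gamma_nat_add_half_eq,
    show (k : ℝ) + 1 / 2 + (n + 1 / 2) = (k + n : ℕ) + 1 by push_cast; ring,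
    Real.Gamma_nat_eq_factorial]
  field_simp

end Beta

section SquareSubstitution

variable {E : Type*} [NormedAddCommGroup E] [NormedSpace ℝ E]

lemma image_sq_Ioo_zero_one : (fun s : ℝ => s ^ 2) '' Ioo 0 1 = Ioo 0 1 := by
  ext t
  constructor
  · rintro ⟨s, ⟨hs0, hs1⟩, rfl⟩
    exact ⟨by positivity, by nlinarith⟩
  · rintro ⟨ht0, ht1⟩
    exact ⟨√t, ⟨Real.sqrt_pos.mpr ht0, by rw [Real.sqrt_lt' one_pos]; simpa⟩, Real.sq_sqrt ht0.le⟩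

lemma hasDerivWithinAt_sq_Ioo (s : ℝ) :
    HasDerivWithinAt (fun s : ℝ => s ^ 2) (2 * s) (Ioo 0 1) s := by
  simpa using (hasDerivAt_pow 2 s).hasDerivWithinAt

lemma injOn_sq_Ioo : InjOn (fun s : ℝ => s ^ 2) (Ioo 0 1) :=
  (pow_left_strictMonoOn₀ two_ne_zero).injOn.mono fun _ hs => hs.1.le

lemma abs_two_mul_smul_eqOn (g : ℝ → E) :
    EqOn (fun s => |2 * s| • g (s ^ 2)) (fun s => (2 * s) • g (s ^ 2)) (Ioo 0 1) :=
  fun s hs => by simp only [abs_of_pos (by linarith [hs.1] : 0 < 2 * s)]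

lemma integrableOn_Ioo_zero_one_iff_comp_sq (g : ℝ → E) :
    IntegrableOn g (Ioo 0 1) ↔ IntegrableOn (fun s => (2 * s) • g (s ^ 2)) (Ioo 0 1) := by
  conv_lhs => rw [← image_sq_Ioo_zero_one]
  rw [integrableOn_image_iff_integrableOn_abs_deriv_smul measurableSet_Ioo
    (fun s _ => hasDerivWithinAt_sq_Ioo s) injOn_sq_Ioo]
  exact integrableOn_congr_fun (abs_two_mul_smul_eqOn g) measurableSet_Ioo

lemma integral_Ioo_zero_one_eq_comp_sq (g : ℝ → E) :
    ∫ t in Ioo 0 1, g t = ∫ s in Ioo 0 1, (2 * s) • g (s ^ 2) := by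
  conv_lhs => rw [← image_sq_Ioo_zero_one]
  rw [integral_image_eq_integral_abs_deriv_smul measurableSet_Ioo
    (fun s _ => hasDerivWithinAt_sq_Ioo s) injOn_sq_Ioo]
  exact setIntegral_congr_fun measurableSet_Ioo (abs_two_mul_smul_eqOn g)

end SquareSubstitution

section Moments

variable {a b : ℝ}

lemma two_mul_smul_rpow_sq_mul_eq {s : ℝ} (hs : s ∈ Ioo 0 1) :
    (2 * s) • ((s ^ 2) ^ (a - 1) * (1 - s ^ 2) ^ (b - 1)) =
      2 * (s ^ (2 * a - 1) * (1 - s ^ 2) ^ (b - 1)) := by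
  rw [smul_eq_mul, ← Real.rpow_natCast, ← Real.rpow_mul hs.1.le,
    show 2 * a - 1 = (2 : ℕ) * (a - 1) + 1 by push_cast; ring, Real.rpow_add_one hs.1.ne']
  ring

lemma integrableOn_rpow_mul_one_sub_sq_rpow (ha : 0 < a) (hb : 0 < b) :
    IntegrableOn (fun s : ℝ => s ^ (2 * a - 1) * (1 - s ^ 2) ^ (b - 1)) (Ioo 0 1) := by
  have h := ((integrableOn_Ioo_zero_one_iff_comp_sq _).mp
    (integrableOn_rpow_mul_one_sub_rpow ha hb)).const_mul (1 / 2)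
  refine IntegrableOn.congr_fun h (fun s hs => ?_) measurableSet_Ioo
  simp only [two_mul_smul_rpow_sq_mul_eq hs]
  ring

lemma integral_rpow_mul_one_sub_sq_rpow (ha : 0 < a) (hb : 0 < b) :
    ∫ s in Ioo 0 1, s ^ (2 * a - 1) * (1 - s ^ 2) ^ (b - 1) =
      ProbabilityTheory.beta a b / 2 := by
  rw [← integral_rpow_mul_one_sub_rpow ha hb,
    integral_Ioo_zero_one_eq_comp_sq fun t : ℝ => t ^ (a - 1) * (1 - t) ^ (b - 1),
    setIntegral_congr_fun measurableSet_Ioo (fun s hs => two_mul_smul_rpow_sq_mul_eq hs),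
    MeasureTheory.integral_const_mul]
  ring

lemma intervalIntegrable_one_sub_sq_rpow (hb : 0 < b) :
    IntervalIntegrable (fun s : ℝ => (1 - s ^ 2) ^ (b - 1)) volume (-1) 1 := by
  have h : IntervalIntegrable (fun s : ℝ => (1 - s ^ 2) ^ (b - 1)) volume 0 1 := by
    rw [intervalIntegrable_iff_integrableOn_Ioo_of_le zero_le_one]
    refine IntegrableOn.congr_fun (integrableOn_rpow_mul_one_sub_sq_rpow one_half_pos hb)
      (fun s _ => ?_) measurableSet_Ioo
    norm_num
  exact (h.neg_of_even fun s => by simp).trans h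

lemma integral_pow_two_mul_mul_one_sub_sq_rpow (hb : 0 < b) (k : ℕ) :
    ∫ s in -1..1, s ^ (2 * k) * (1 - s ^ 2) ^ (b - 1) =
      ProbabilityTheory.beta (k + 1 / 2) b := by
  have h01 : IntervalIntegrable (fun s : ℝ => s ^ (2 * k) * (1 - s ^ 2) ^ (b - 1)) volume 0 1 :=
    ((intervalIntegrable_one_sub_sq_rpow hb).mono_set
      (by simp [uIcc_of_le, Icc_subset_Icc])).continuousOn_mul (by fun_prop)
  have hpow : EqOn (fun s : ℝ => s ^ (2 * ((k : ℝ) + 1 / 2) - 1) * (1 - s ^ 2) ^ (b - 1))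
      (fun s => s ^ (2 * k) * (1 - s ^ 2) ^ (b - 1)) (Ioo 0 1) := fun s _ => by
    simp only [show 2 * ((k : ℝ) + 1 / 2) - 1 = (2 * k : ℕ) by push_cast; ring,
      Real.rpow_natCast]
  rw [integral_eq_two_smul_of_even (fun s => by simp [pow_mul]) h01, integral_of_le zero_le_one,
    integral_Ioc_eq_integral_Ioo, ← setIntegral_congr_fun measurableSet_Ioo hpow,
    integral_rpow_mul_one_sub_sq_rpow (by positivity) hb, smul_eq_mul]
  ring

lemma integral_pow_mul_one_sub_sq_rpow_of_odd {m : ℕ} (hm : Odd m) :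
    ∫ s in -1..1, s ^ m * (1 - s ^ 2) ^ (b - 1) = 0 :=
  integral_eq_zero_of_odd fun s => by simp [hm.neg_pow]

end Moments

lemma norm_I_mul_mul_le {s : ℝ} (hs : s ∈ Ι (-1) 1) (x : ℝ) :
    ‖Complex.I * s * x‖ ≤ |x| := by
  rw [uIoc_of_le (by norm_num)] at hs
  have : |s| ≤ 1 := abs_le.mpr ⟨hs.1.le, hs.2⟩
  simpa [abs_mul] using mul_le_of_le_one_left (abs_nonneg x) this

lemma hasSum_integral_EmuC_mul {μ : ℝ} (hμ : 0 ≤ μ) {w : ℝ → ℂ}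
    (hw : IntervalIntegrable w volume (-1) 1) (x : ℝ) :
    HasSum (fun m => (Complex.I * x) ^ m / (dFact μ m : ℂ) * ∫ s in -1..1, (s : ℂ) ^ m * w s)
      (∫ s in -1..1, EmuC μ (Complex.I * s * x) * w s) := by
  have hbound (m : ℕ) (s : ℝ) (hs : s ∈ Ι (-1) 1) :
      ‖(Complex.I * s * x) ^ m / (dFact μ m : ℂ) * w s‖ ≤ |x| ^ m / m ! * ‖w s‖ := by
    rw [norm_mul]
    gcongr
    exact (norm_pow_div_dFact_le hμ _ m).trans (by gcongr; exact norm_I_mul_mul_le hs x)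
  have hint : IntervalIntegrable (fun s => ∑' m : ℕ, |x| ^ m / m ! * ‖w s‖) volume (-1) 1 := by
    simp only [tsum_mul_right]
    exact hw.norm.const_mul _
  have h := hasSum_integral_of_dominated_convergence
    (F := fun m s => (Complex.I * s * x) ^ m / (dFact μ m : ℂ) * w s)
    (fun m s => |x| ^ m / m ! * ‖w s‖)
    (fun m => (Continuous.aestronglyMeasurable (by fun_prop)).mul hw.def'.aestronglyMeasurable)
    (fun m => ae_of_all _ (hbound m))
    (ae_of_all _ fun s _ => (Real.summable_pow_div_factorial |x|).mul_right _) hint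
    (ae_of_all _ fun s _ => (hasSum_EmuC hμ _).mul_right (w s))
  have hterm (m : ℕ) : (Complex.I * x) ^ m / (dFact μ m : ℂ) * ∫ s in -1..1, (s : ℂ) ^ m * w s =
      ∫ s in -1..1, (Complex.I * s * x) ^ m / (dFact μ m : ℂ) * w s := by
    rw [← intervalIntegral.integral_const_mul]
    congr with s
    ring
  simpa only [hterm] using h

lemma hasSum_integral_EmuC_mul_one_sub_sq_rpow {μ b : ℝ} (hμ : 0 ≤ μ) (hb : 0 < b) (x : ℝ) :
    HasSum (fun k : ℕ => (((-1) ^ k * x ^ (2 * k) / dFact μ (2 * k) *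
        ProbabilityTheory.beta (k + 1 / 2) b : ℝ) : ℂ))
      (∫ s in -1..1, EmuC μ (Complex.I * s * x) * (((1 - s ^ 2) ^ (b - 1) : ℝ) : ℂ)) := by
  have hw := intervalIntegrable_one_sub_sq_rpow hb
  have hwC : IntervalIntegrable (fun s : ℝ => (((1 - s ^ 2) ^ (b - 1) : ℝ) : ℂ)) volume (-1) 1 :=
    ⟨hw.1.ofReal (𝕜 := ℂ), hw.2.ofReal (𝕜 := ℂ)⟩
  have h := hasSum_integral_EmuC_mul hμ hwC x
  have hmoment (m : ℕ) : ∫ s in -1..1, (s : ℂ) ^ m * (((1 - s ^ 2) ^ (b - 1) : ℝ) : ℂ) =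
      ((∫ s in -1..1, s ^ m * (1 - s ^ 2) ^ (b - 1) : ℝ) : ℂ) := by
    rw [← intervalIntegral.integral_ofReal]
    push_cast
    rfl
  simp only [hmoment] at h
  rw [← (mul_right_injective₀ (two_ne_zero' ℕ)).hasSum_iff] at h
  · convert h using 2 with k
    rw [Function.comp_apply, integral_pow_two_mul_mul_one_sub_sq_rpow hb k, mul_pow,
      pow_mul Complex.I, Complex.I_sq]
    push_cast
    ring
  · intro m hm
    have hodd : Odd m := Nat.not_even_iff_odd.mp fun ⟨k, hk⟩ => hm ⟨k, by dsimp only; omega⟩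
    rw [integral_pow_mul_one_sub_sq_rpow_of_odd hodd, Complex.ofReal_zero, mul_zero]

/-- The second deformed Bessel function, defined by the deformed Poisson integral,
has the stated Taylor expansion. -/
theorem J2mu_poisson (μ : ℝ) (hμ : 0 ≤ μ) (n : ℕ) (x : ℝ) :
    (((x / 2) ^ n / (Real.Gamma (1 / 2) * Real.Gamma ((n : ℝ) + 1 / 2)) : ℝ) : ℂ) *
        ∫ s in (-1 : ℝ)..1, EmuC μ (Complex.I * s * x) * (((1 - s ^ 2) ^ ((n : ℝ) - 1 / 2) : ℝ) : ℂ) =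
      ((∑' k : ℕ, (-1 : ℝ) ^ k * (Nat.factorial (2 * k)) /
          ((Nat.factorial k) * (Nat.factorial (k + n)) * dFact μ (2 * k)) *
        (x / 2) ^ (2 * k + n) : ℝ) : ℂ) := by
  set C := (x / 2) ^ n / (Gamma (1 / 2) * Gamma ((n : ℝ) + 1 / 2))
  have h := (hasSum_integral_EmuC_mul_one_sub_sq_rpow hμ
    (b := n + 1 / 2) (by positivity) x).mul_left (C : ℂ)
  have hcoeff (k : ℕ) : C * ((-1) ^ k * x ^ (2 * k) / dFact μ (2 * k) *
      ProbabilityTheory.beta (k + 1 / 2) (n + 1 / 2)) =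
      (-1) ^ k * (2 * k)! / (k ! * (k + n)! * dFact μ (2 * k)) * (x / 2) ^ (2 * k + n) := by
    have hx : x ^ (2 * k) = (x / 2) ^ (2 * k) * 4 ^ k := by
      rw [pow_mul, pow_mul, ← mul_pow]
      ring
    simp only [C]
    rw [ProbabilityTheory.beta_nat_add_half_nat_add_half, hx, pow_add]
    field_simp
  simp only [← Complex.ofReal_mul, hcoeff, show (n : ℝ) + 1 / 2 - 1 = n - 1 / 2 by ring] at h
  rw [← h.tsum_eq, Complex.ofReal_tsum]
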